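/- Let μ(J,h) be a ferromagnetic Ising model on n nodes (J_{ij} ≥ 0, h_i ≥ 0 for all i,j). Then for every subset S ⊆ [n], Pr(X_s = 1 for all s ∈ S) ≥ 2^{-|S|}. -/

import Mathlib

open Finset
open scoped BigOperators Classical

noncomputable section

/-- The value of a spin: `true ↦ 1`, `false ↦ -1`. -/
def spin (b : Bool) : ℝ := if b then 1 else -1

/-- Boltzmann weight of a configuration of the Ising model `μ(J,h)`. -/
def isingWeight (n : ℕ) (J : Fin n → Fin n → ℝ) (h : Fin n → ℝ) (x : Fin n → Bool) : ℝ :=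
  Real.exp ((1 / 2) * (∑ a, ∑ b, J a b * spin (x a) * spin (x b)) + ∑ a, h a * spin (x a))

/-- Partition function of the Ising model `μ(J,h)`. -/
def isingZ (n : ℕ) (J : Fin n → Fin n → ℝ) (h : Fin n → ℝ) : ℝ :=
  ∑ x : Fin n → Bool, isingWeight n J h x

/-!
Write `σ_A(x) = ∏_{a ∈ A} x_a`. Since each `σ_A` takes values `±1`, for `t ≥ 0`
`exp (t σ_A) = cosh t + sinh t · σ_A` is a nonnegative combination of the `σ_B`; as
`σ_A σ_B = σ_{A ∆ B}`, such combinations are closed under products, so the Boltzmann weight of a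
ferromagnetic model is one. Each `σ_A` has nonnegative sum over the cube, which gives Griffiths'
first inequality `∑_x w(x) σ_A(x) ≥ 0`. Finally `1[x_s = 1 ∀ s ∈ S] = 2^{-|S|} ∑_{A ⊆ S} σ_A(x)`,
and dropping every term but `A = ∅` leaves `2^{-|S|} Z`.
-/

open scoped symmDiff

namespace Ising

variable {ι : Type*}

def spinProd (A : Finset ι) (x : ι → Bool) : ℝ := ∏ a ∈ A, spin (x a)

lemma spin_mul_self (b : Bool) : spin b * spin b = 1 := by cases b <;> norm_num [spin]

lemma spinProd_eq_prod_univ [Fintype ι] [DecidableEq ι] (A : Finset ι) (x : ι → Bool) :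
    spinProd A x = ∏ a, if a ∈ A then spin (x a) else 1 := by
  rw [prod_ite_mem, univ_inter, spinProd]

@[simp]
lemma spinProd_empty : spinProd (∅ : Finset ι) = 1 := by
  funext x; simp [spinProd]

@[simp]
lemma spinProd_singleton (a : ι) (x : ι → Bool) : spinProd {a} x = spin (x a) :=
  prod_singleton _ _

lemma spinProd_mul_spinProd [Fintype ι] [DecidableEq ι] (A B : Finset ι) :
    spinProd A * spinProd B = spinProd (A ∆ B) := by
  funext x
  simp only [Pi.mul_apply, spinProd_eq_prod_univ, ← prod_mul_distrib]
  refine prod_congr rfl fun a _ => ?_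
  by_cases ha : a ∈ A <;> by_cases hb : a ∈ B <;> simp [ha, hb, mem_symmDiff, spin_mul_self]

lemma sum_spinProd_nonneg [Fintype ι] [DecidableEq ι] (A : Finset ι) : 0 ≤ ∑ x, spinProd A x := by
  simp_rw [spinProd_eq_prod_univ]
  rw [← Fintype.prod_sum (fun a b => if a ∈ A then spin b else 1)]
  -- each factor is `∑_b spin b = 0` or `∑_b 1 = 2`
  refine prod_nonneg fun a _ => ?_
  by_cases ha : a ∈ A <;> simp [ha, spin]

variable (ι) in
def spinProdCone : PointedCone ℝ ((ι → Bool) → ℝ) :=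
  PointedCone.hull ℝ (Set.range spinProd)

lemma spinProd_mem_spinProdCone (A : Finset ι) : spinProd A ∈ spinProdCone ι :=
  Submodule.subset_span ⟨A, rfl⟩

lemma one_mem_spinProdCone : 1 ∈ spinProdCone ι :=
  spinProd_empty (ι := ι) ▸ spinProd_mem_spinProdCone ∅

lemma smul_mem_spinProdCone {c : ℝ} (hc : 0 ≤ c) {f : (ι → Bool) → ℝ}
    (hf : f ∈ spinProdCone ι) : c • f ∈ spinProdCone ι :=
  Submodule.smul_mem _ ⟨c, hc⟩ hf

lemma mul_mem_spinProdCone [Fintype ι] [DecidableEq ι] {f g : (ι → Bool) → ℝ}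
    (hf : f ∈ spinProdCone ι) (hg : g ∈ spinProdCone ι) : f * g ∈ spinProdCone ι := by
  induction hf using Submodule.span_induction with
  | mem f hf =>
    obtain ⟨A, rfl⟩ := hf
    induction hg using Submodule.span_induction with
    | mem g hg =>
      obtain ⟨B, rfl⟩ := hg
      rw [spinProd_mul_spinProd]
      exact spinProd_mem_spinProdCone _
    | zero => simp
    | add g g' _ _ hg hg' => rw [mul_add]; exact add_mem hg hg'
    | smul c g _ hg => rw [mul_smul_comm]; exact Submodule.smul_mem _ c hg
  | zero => simp
  | add f f' _ _ hf hf' => rw [add_mul]; exact add_mem hf hf'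
  | smul c f _ hf => rw [smul_mul_assoc]; exact Submodule.smul_mem _ c hf

lemma prod_mem_spinProdCone [Fintype ι] [DecidableEq ι] {κ : Type*} (s : Finset κ)
    {f : κ → (ι → Bool) → ℝ} (hf : ∀ i ∈ s, f i ∈ spinProdCone ι) :
    ∏ i ∈ s, f i ∈ spinProdCone ι :=
  prod_induction _ _ (fun _ _ => mul_mem_spinProdCone) one_mem_spinProdCone hf

lemma sum_nonneg_of_mem_spinProdCone [Fintype ι] [DecidableEq ι] {f : (ι → Bool) → ℝ}
    (hf : f ∈ spinProdCone ι) : 0 ≤ ∑ x, f x := by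
  induction hf using Submodule.span_induction with
  | mem f hf => obtain ⟨A, rfl⟩ := hf; exact sum_spinProd_nonneg A
  | zero => simp
  | add f f' _ _ hf hf' => simpa [sum_add_distrib] using add_nonneg hf hf'
  | smul c f _ hf =>
    simpa [← Nonneg.coe_smul, ← mul_sum] using mul_nonneg c.2 hf

lemma exp_mul_spinProd_mem_spinProdCone [Fintype ι] [DecidableEq ι] {t : ℝ} (ht : 0 ≤ t)
    (A : Finset ι) : (fun x => Real.exp (t * spinProd A x)) ∈ spinProdCone ι := by
  have hexp : (fun x => Real.exp (t * spinProd A x)) =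
      Real.cosh t • 1 + Real.sinh t • spinProd A := by
    funext x
    have hsq : spinProd A x * spinProd A x = 1 := by
      simpa using congrFun (spinProd_mul_spinProd A A) x
    rcases mul_self_eq_one_iff.mp hsq with h1 | h1 <;>
      simp [h1, Real.cosh_add_sinh, ← Real.cosh_sub_sinh, sub_eq_add_neg]
  rw [hexp]
  exact add_mem (smul_mem_spinProdCone (Real.cosh_pos t).le one_mem_spinProdCone)
    (smul_mem_spinProdCone (Real.sinh_nonneg_iff.mpr ht) (spinProd_mem_spinProdCone A))

variable {n : ℕ}

lemma isingWeight_eq_prod (J : Fin n → Fin n → ℝ) (h : Fin n → ℝ) :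
    isingWeight n J h =
      (∏ a, ∏ b, fun x => Real.exp (J a b / 2 * spinProd ({a} ∆ {b}) x)) *
        ∏ a, fun x => Real.exp (h a * spinProd {a} x) := by
  funext x
  simp only [isingWeight, Pi.mul_apply, prod_apply, ← spinProd_mul_spinProd, spinProd_singleton,
    Real.exp_add, Real.exp_sum, mul_sum]
  congr 1
  refine prod_congr rfl fun a _ => prod_congr rfl fun b _ => ?_
  ring_nf

lemma isingWeight_mem_spinProdCone {J : Fin n → Fin n → ℝ} {h : Fin n → ℝ}
    (hJ : ∀ a b, 0 ≤ J a b) (hh : ∀ a, 0 ≤ h a) : isingWeight n J h ∈ spinProdCone (Fin n) := by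
  rw [isingWeight_eq_prod]
  refine mul_mem_spinProdCone (prod_mem_spinProdCone _ fun a _ => ?_)
    (prod_mem_spinProdCone _ fun a _ => exp_mul_spinProd_mem_spinProdCone (hh a) _)
  exact prod_mem_spinProdCone _ fun b _ =>
    exp_mul_spinProd_mem_spinProdCone (div_nonneg (hJ a b) zero_le_two) _

theorem sum_isingWeight_mul_spinProd_nonneg {J : Fin n → Fin n → ℝ} {h : Fin n → ℝ}
    (hJ : ∀ a b, 0 ≤ J a b) (hh : ∀ a, 0 ≤ h a) (A : Finset (Fin n)) :
    0 ≤ ∑ x, isingWeight n J h x * spinProd A x :=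
  sum_nonneg_of_mem_spinProdCone
    (mul_mem_spinProdCone (isingWeight_mem_spinProdCone hJ hh) (spinProd_mem_spinProdCone A))

lemma ite_forall_true_eq_sum_spinProd (S : Finset (Fin n)) (x : Fin n → Bool) :
    (if ∀ s ∈ S, x s = true then (1 : ℝ) else 0) =
      (1 / 2) ^ #S * ∑ A ∈ S.powerset, spinProd A x := by
  convert (prod_boole (s := S) (p := fun s => x s = true) (M₀ := ℝ)).symm
  simp only [spinProd, ← prod_one_add, ← prod_const, ← prod_mul_distrib]
  refine prod_congr rfl fun s _ => ?_
  cases x s <;> norm_num [spin]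

end Ising

open Ising

theorem all_plus_prob_lb_general (n : ℕ) (J : Fin n → Fin n → ℝ) (h : Fin n → ℝ)
    (hJ : ∀ a b, 0 ≤ J a b) (hh : ∀ a, 0 ≤ h a)
    (S : Finset (Fin n)) :
    (∑ x : Fin n → Bool, if ∀ s ∈ S, x s = true then isingWeight n J h x else 0) /
        isingZ n J h ≥ (1 / 2 : ℝ) ^ S.card := by
  have hZ : 0 < isingZ n J h := sum_pos (fun x _ => Real.exp_pos _) univ_nonempty
  have hnum : (∑ x : Fin n → Bool, if ∀ s ∈ S, x s = true then isingWeight n J h x else 0) =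
      (1 / 2) ^ #S * ∑ A ∈ S.powerset, ∑ x, isingWeight n J h x * spinProd A x := by
    calc _ = ∑ x, isingWeight n J h x * ((1 / 2) ^ #S * ∑ A ∈ S.powerset, spinProd A x) :=
          sum_congr rfl fun x _ => by rw [← ite_forall_true_eq_sum_spinProd, mul_boole]
      _ = _ := by
          simp_rw [mul_sum]
          rw [sum_comm]
          exact sum_congr rfl fun _ _ => sum_congr rfl fun _ _ => by ring
  rw [ge_iff_le, le_div_iff₀ hZ, hnum]
  gcongr
  calc isingZ n J h = ∑ x, isingWeight n J h x * spinProd ∅ x := by simp [isingZ]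
    _ ≤ _ := single_le_sum (fun A _ => sum_isingWeight_mul_spinProd_nonneg hJ hh A)
        (empty_mem_powerset S)

/-- In a ferromagnetic Ising model, `Pr(X_s = 1 for all s ∈ S) ≥ 2^{-|S|}`. -/
theorem all_plus_prob_lb (n : ℕ) (J : Fin n → Fin n → ℝ) (h : Fin n → ℝ)
    (hsymm : ∀ a b, J a b = J b a) (hdiag : ∀ a, J a a = 0)
    (hJ : ∀ a b, 0 ≤ J a b) (hh : ∀ a, 0 ≤ h a)
    (S : Finset (Fin n)) :
    (∑ x : Fin n → Bool, if ∀ s ∈ S, x s = true then isingWeight n J h x else 0) /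
        isingZ n J h ≥ (1 / 2 : ℝ) ^ S.card :=
  all_plus_prob_lb_general n J h hJ hh S

end
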